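/- arXiv:2305.11813 — 2 statements merged into one kernel-verified Lean document; each statement's English description precedes it below -/
import Mathlib

section
/- For every CPE φ, the arithmetisation of conv(φ) is a binary multilinear polynomial that is binary equivalent to the arithmetisation of φ, i.e., ⟦conv(φ)⟧ is multilinear, takes values in {0,1} on all binary assignments, and agrees with ⟦φ⟧ on all binary assignments. -/
open MvPolynomial

/-- Degree reduction `δ_x`: replaces every power `x^j` (`j ≥ 1`) in each monomial by `x`. -/
noncomputable def deltaRed {V F : Type*} [CommRing F] [DecidableEq V]
    (x : V) (p : MvPolynomial V F) : MvPolynomial V F :=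
  p.support.sum fun m => monomial (Finsupp.update m x (min (m x) 1)) (coeff m p)

/-- Partial evaluation `[x := a] p`: substitute the constant `a` for variable `x`. -/
noncomputable def pevalVar {V F : Type*} [CommRing F] [DecidableEq V]
    (x : V) (a : F) (p : MvPolynomial V F) : MvPolynomial V F :=
  aeval (fun y => if y = x then C a else X y) p

/-- A polynomial is multilinear if every variable has degree at most 1 in every monomial. -/
def Multilinear {V F : Type*} [CommSemiring F] (p : MvPolynomial V F) : Prop :=
  ∀ m ∈ p.support, ∀ x : V, m x ≤ 1

/-- Binary equivalence: `p` and `q` agree on all assignments with values in `{0,1}`. -/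
def BinaryEquiv {V F : Type*} [CommSemiring F] (p q : MvPolynomial V F) : Prop :=
  ∀ σ : V → F, (∀ x, σ x = 0 ∨ σ x = 1) → eval σ p = eval σ q

/-- A polynomial is binary if it takes values in `{0,1}` on all `{0,1}` assignments. -/
def BinaryPoly {V F : Type*} [CommSemiring F] (p : MvPolynomial V F) : Prop :=
  ∀ σ : V → F, (∀ x, σ x = 0 ∨ σ x = 1) → eval σ p = 0 ∨ eval σ p = 1

/-- Circuit with partial evaluation (CPE) over variables `Fin n`. -/
inductive CPE (n : ℕ) where
  | tru  : CPE n
  | fls  : CPE n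
  | var  (x : Fin n) : CPE n
  | not  (φ : CPE n) : CPE n
  | and  (φ ψ : CPE n) : CPE n
  | or   (φ ψ : CPE n) : CPE n
  | pev  (x : Fin n) (b : Bool) (φ : CPE n) : CPE n

/-- Boolean semantics `P_φ` of a CPE. -/
def CPE.sem {n : ℕ} : CPE n → (Fin n → Bool) → Bool
  | tru, _ => true
  | fls, _ => false
  | var x, σ => σ x
  | not φ, σ => !(φ.sem σ)
  | and φ ψ, σ => φ.sem σ && ψ.sem σ
  | or φ ψ, σ => φ.sem σ || ψ.sem σ
  | pev x b φ, σ => φ.sem (Function.update σ x b)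

/-- Arithmetisation `⟦φ⟧` of a CPE. -/
noncomputable def CPE.arith {n : ℕ} (F : Type*) [CommRing F] : CPE n → MvPolynomial (Fin n) F
  | tru => 1
  | fls => 0
  | var x => MvPolynomial.X x
  | not φ => 1 - φ.arith F
  | and φ ψ => φ.arith F * ψ.arith F
  | or φ ψ => φ.arith F + ψ.arith F - φ.arith F * ψ.arith F
  | pev x b φ => pevalVar x (if b then 1 else 0) (φ.arith F)

/-- Degree reduction over all variables `x₁, …, xₙ`. -/
noncomputable def deltaAll {n : ℕ} {F : Type*} [CommRing F]
    (p : MvPolynomial (Fin n) F) : MvPolynomial (Fin n) F :=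
  (List.finRange n).foldr deltaRed p

/-- Arithmetisation `⟦conv(φ)⟧` of the degree-reduced circuit `conv(φ)`. -/
noncomputable def convArith {n : ℕ} (F : Type*) [CommRing F] : CPE n → MvPolynomial (Fin n) F
  | .tru => 1
  | .fls => 0
  | .var x => MvPolynomial.X x
  | .not φ => 1 - convArith F φ
  | .and φ ψ => deltaAll (convArith F φ * convArith F ψ)
  | .or φ ψ => deltaAll (convArith F φ + convArith F ψ - convArith F φ * convArith F ψ)
  | .pev x b φ => pevalVar x (if b then 1 else 0) (convArith F φ)

section Helpers

variable {n : ℕ} {F : Type*} [CommRing F]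

lemma pow_min_one {a : F} (ha : a = 0 ∨ a = 1) (k : ℕ) : a ^ min k 1 = a ^ k := by
  rcases ha with h | h <;> subst h
  · rcases Nat.eq_zero_or_pos k with hk | hk
    · simp [hk]
    · have h1 : min k 1 = 1 := Nat.min_eq_right hk
      rw [h1, pow_one, zero_pow hk.ne']
  · simp

lemma eval_deltaRed (x : Fin n) (p : MvPolynomial (Fin n) F) (σ : Fin n → F)
    (hσ : ∀ y, σ y = 0 ∨ σ y = 1) : eval σ (deltaRed x p) = eval σ p := by
  rw [deltaRed, map_sum]
  conv_rhs => rw [p.as_sum, map_sum]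
  refine Finset.sum_congr rfl fun m _ => ?_
  rw [eval_monomial, eval_monomial]
  congr 1
  rw [Finsupp.prod_fintype _ _ (fun y => pow_zero _),
      Finsupp.prod_fintype _ _ (fun y => pow_zero _)]
  refine Finset.prod_congr rfl fun y _ => ?_
  rcases eq_or_ne y x with rfl | hy
  · simp only [Finsupp.coe_update, Function.update_self]
    exact pow_min_one (hσ y) _
  · simp [Finsupp.coe_update, Function.update_of_ne hy]

lemma support_deltaRed (x : Fin n) (p : MvPolynomial (Fin n) F) :
    ∀ m' ∈ (deltaRed x p).support, ∃ m ∈ p.support,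
      m' = Finsupp.update m x (min (m x) 1) := by
  intro m' hm'
  rw [MvPolynomial.mem_support_iff, deltaRed] at hm'
  rw [MvPolynomial.coeff_sum] at hm'
  obtain ⟨m, hm, hne⟩ := Finset.exists_ne_zero_of_sum_ne_zero hm'
  rw [coeff_monomial] at hne
  rcases eq_or_ne (Finsupp.update m x (min (m x) 1)) m' with h | h
  · exact ⟨m, hm, h.symm⟩
  · rw [if_neg h] at hne; exact absurd rfl hne

lemma pevalVar_eq (x : Fin n) (a : F) (p : MvPolynomial (Fin n) F) :
    pevalVar x a p = p.support.sum fun m =>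
      monomial (Finsupp.erase x m) (coeff m p * a ^ m x) := by
  conv_lhs => rw [pevalVar, p.as_sum, map_sum]
  refine Finset.sum_congr rfl fun m _ => ?_
  rw [aeval_monomial, monomial_eq,
      Finsupp.prod_fintype _ _ (fun y => pow_zero _),
      Finsupp.prod_fintype _ _ (fun y => pow_zero _),
      Finset.prod_eq_mul_prod_sdiff_singleton_of_mem (Finset.mem_univ x),
      Finset.prod_eq_mul_prod_sdiff_singleton_of_mem (Finset.mem_univ x)]
  have hprod : ∀ y ∈ (Finset.univ : Finset (Fin n)) \ {x},
      ((if y = x then (C a : MvPolynomial (Fin n) F) else X y)) ^ m y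
        = X y ^ (Finsupp.erase x m) y := by
    intro y hy
    have hyx : y ≠ x := by simpa using (Finset.mem_sdiff.mp hy).2
    simp [hyx, Finsupp.erase_ne hyx]
  rw [Finset.prod_congr rfl hprod, if_pos rfl, Finsupp.erase_same, pow_zero, one_mul,
      algebraMap_eq, ← C_pow, ← mul_assoc, ← C_mul]

lemma support_pevalVar (x : Fin n) (a : F) (p : MvPolynomial (Fin n) F) :
    ∀ m' ∈ (pevalVar x a p).support, ∃ m ∈ p.support, m' = Finsupp.erase x m := by
  intro m' hm'
  rw [pevalVar_eq, MvPolynomial.mem_support_iff, MvPolynomial.coeff_sum] at hm'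
  obtain ⟨m, hm, hne⟩ := Finset.exists_ne_zero_of_sum_ne_zero hm'
  rw [coeff_monomial] at hne
  rcases eq_or_ne (Finsupp.erase x m) m' with h | h
  · exact ⟨m, hm, h.symm⟩
  · rw [if_neg h] at hne; exact absurd rfl hne

lemma eval_pevalVar (x : Fin n) (a : F) (p : MvPolynomial (Fin n) F) (σ : Fin n → F) :
    eval σ (pevalVar x a p) = eval (Function.update σ x a) p := by
  induction p using MvPolynomial.induction_on with
  | C c => simp [pevalVar]
  | add p q hp hq => simp only [pevalVar, map_add] at *; rw [hp, hq]
  | mul_X p y hp =>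
    simp only [pevalVar, map_mul, aeval_X] at *
    rw [hp]
    congr 1
    rcases eq_or_ne y x with rfl | hy
    · simp
    · simp [hy, Function.update_of_ne hy]

lemma eval_deltaAll (p : MvPolynomial (Fin n) F) (σ : Fin n → F)
    (hσ : ∀ y, σ y = 0 ∨ σ y = 1) : eval σ (deltaAll p) = eval σ p := by
  rw [deltaAll]
  induction (List.finRange n) with
  | nil => rfl
  | cons x l ih => rw [List.foldr_cons, eval_deltaRed x _ σ hσ, ih]

lemma foldr_deltaRed_bound (l : List (Fin n)) (p : MvPolynomial (Fin n) F) :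
    ∀ m ∈ (l.foldr deltaRed p).support, ∀ x ∈ l, m x ≤ 1 := by
  induction l with
  | nil => simp
  | cons y l ih =>
    intro m hm x hx
    rw [List.foldr_cons] at hm
    obtain ⟨m₀, hm₀, rfl⟩ := support_deltaRed y _ m hm
    rcases eq_or_ne x y with rfl | hxy
    · simp [Finsupp.coe_update]
    · have hxl : x ∈ l := by
        rcases List.mem_cons.mp hx with h | h
        · exact absurd h hxy
        · exact h
      have := ih m₀ hm₀ x hxl
      simpa [Finsupp.coe_update, Function.update_of_ne hxy] using this

lemma multilinear_deltaAll (p : MvPolynomial (Fin n) F) : Multilinear (deltaAll p) := by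
  intro m hm x
  exact foldr_deltaRed_bound (List.finRange n) p m hm x (List.mem_finRange x)

lemma multilinear_pevalVar (x : Fin n) (a : F) (p : MvPolynomial (Fin n) F)
    (hp : Multilinear p) : Multilinear (pevalVar x a p) := by
  intro m' hm' y
  obtain ⟨m, hm, rfl⟩ := support_pevalVar x a p m' hm'
  rcases eq_or_ne y x with rfl | hy
  · simp [Finsupp.erase_same]
  · rw [Finsupp.erase_ne hy]
    exact hp m hm y

lemma multilinear_one_sub (p : MvPolynomial (Fin n) F) (hp : Multilinear p) :
    Multilinear (1 - p) := by
  intro m hm x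
  rw [MvPolynomial.mem_support_iff, coeff_sub] at hm
  by_cases h : m ∈ p.support
  · exact hp m h x
  · rw [MvPolynomial.notMem_support_iff] at h
    rw [h, sub_zero, coeff_one] at hm
    by_cases h0 : m = 0
    · simp [h0]
    · rw [if_neg (fun hh => h0 hh.symm)] at hm
      exact absurd rfl hm

end Helpers

/-- `⟦conv(φ)⟧` is a binary multilinear polynomial binary equivalent to `⟦φ⟧`. -/
theorem convArith_binary_multilinear {q : ℕ} [Fact q.Prime] {n : ℕ} (φ : CPE n) :
    Multilinear (convArith (ZMod q) φ) ∧
    BinaryPoly (convArith (ZMod q) φ) ∧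
    BinaryEquiv (convArith (ZMod q) φ) (φ.arith (ZMod q)) := by
  induction φ with
  | tru =>
    refine ⟨?_, fun σ hσ => ?_, fun σ hσ => ?_⟩
    · intro m hm x
      rw [MvPolynomial.mem_support_iff] at hm
      rw [convArith, coeff_one] at hm
      by_cases h0 : m = 0
      · simp [h0]
      · rw [if_neg (fun hh => h0 hh.symm)] at hm
        exact absurd rfl hm
    · simp [convArith]
    · simp [convArith, CPE.arith]
  | fls =>
    refine ⟨?_, fun σ hσ => ?_, fun σ hσ => ?_⟩
    · intro m hm x
      simp [convArith] at hm
    · simp [convArith]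
    · simp [convArith, CPE.arith]
  | var x =>
    refine ⟨?_, fun σ hσ => ?_, fun σ hσ => ?_⟩
    · intro m hm y
      rw [convArith, MvPolynomial.support_X, Finset.mem_singleton] at hm
      subst hm
      simp [Finsupp.single_apply]
      split <;> simp
    · simpa [convArith] using hσ x
    · simp [convArith, CPE.arith]
  | not φ ih =>
    obtain ⟨ihm, ihb, ihe⟩ := ih
    refine ⟨multilinear_one_sub _ ihm, fun σ hσ => ?_, fun σ hσ => ?_⟩
    · rw [convArith, map_sub, map_one]
      rcases ihb σ hσ with h | h <;> rw [h] <;> simp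
    · rw [convArith, CPE.arith, map_sub, map_sub, ihe σ hσ]
  | and φ ψ ihφ ihψ =>
    obtain ⟨_, ihbφ, iheφ⟩ := ihφ
    obtain ⟨_, ihbψ, iheψ⟩ := ihψ
    refine ⟨multilinear_deltaAll _, fun σ hσ => ?_, fun σ hσ => ?_⟩
    · rw [convArith, eval_deltaAll _ _ hσ, map_mul]
      rcases ihbφ σ hσ with h1 | h1 <;> rcases ihbψ σ hσ with h2 | h2 <;>
        rw [h1, h2] <;> simp
    · rw [convArith, CPE.arith, eval_deltaAll _ _ hσ, map_mul, map_mul,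
          iheφ σ hσ, iheψ σ hσ]
  | or φ ψ ihφ ihψ =>
    obtain ⟨_, ihbφ, iheφ⟩ := ihφ
    obtain ⟨_, ihbψ, iheψ⟩ := ihψ
    refine ⟨multilinear_deltaAll _, fun σ hσ => ?_, fun σ hσ => ?_⟩
    · rw [convArith, eval_deltaAll _ _ hσ, map_sub, map_add, map_mul]
      rcases ihbφ σ hσ with h1 | h1 <;> rcases ihbψ σ hσ with h2 | h2 <;>
        rw [h1, h2] <;> simp
    · rw [convArith, CPE.arith, eval_deltaAll _ _ hσ, map_sub, map_sub,
          map_add, map_add, map_mul, map_mul, iheφ σ hσ, iheψ σ hσ]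
  | pev x b φ ih =>
    obtain ⟨ihm, ihb, ihe⟩ := ih
    have ha : (if b then (1 : ZMod q) else 0) = 0 ∨ (if b then (1 : ZMod q) else 0) = 1 := by
      cases b <;> simp
    refine ⟨multilinear_pevalVar _ _ _ ihm, fun σ hσ => ?_, fun σ hσ => ?_⟩
    · rw [convArith, eval_pevalVar]
      refine ihb _ fun y => ?_
      rcases eq_or_ne y x with rfl | hy
      · simpa using ha
      · simpa [Function.update_of_ne hy] using hσ y
    · have hσ' : ∀ y, Function.update σ x (if b then (1 : ZMod q) else 0) y = 0 ∨
          Function.update σ x (if b then (1 : ZMod q) else 0) y = 1 := by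
        intro y
        rcases eq_or_ne y x with rfl | hy
        · simpa using ha
        · simpa [Function.update_of_ne hy] using hσ y
      rw [convArith, CPE.arith, eval_pevalVar, eval_pevalVar, ihe _ hσ']
end

section
/- Every descendant node ψ of the degree-reduced circuit conv(φ) has arithmetisation ⟦ψ⟧ of maximum degree at most 2, i.e., every variable appears with exponent at most 2 in every monomial of ⟦ψ⟧. -/
open MvPolynomial

/-- Circuit with partial evaluation and degree reduction (CPD). -/
inductive CPD (n : ℕ) where
  | tru  : CPD n
  | fls  : CPD n
  | var  (x : Fin n) : CPD n
  | not  (φ : CPD n) : CPD n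
  | and  (φ ψ : CPD n) : CPD n
  | or   (φ ψ : CPD n) : CPD n
  | pev  (x : Fin n) (b : Bool) (φ : CPD n) : CPD n
  | delta (x : Fin n) (φ : CPD n) : CPD n

/-- Arithmetisation of a CPD. -/
noncomputable def CPD.arith {n : ℕ} (F : Type*) [CommRing F] : CPD n → MvPolynomial (Fin n) F
  | tru => 1
  | fls => 0
  | var x => MvPolynomial.X x
  | not φ => 1 - φ.arith F
  | and φ ψ => φ.arith F * ψ.arith F
  | or φ ψ => φ.arith F + ψ.arith F - φ.arith F * ψ.arith F
  | pev x b φ => pevalVar x (if b then 1 else 0) (φ.arith F)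
  | delta x φ => deltaRed x (φ.arith F)

/-- Conversion of a CPE into a CPD: a chain of degree reductions over all variables is
inserted before every binary node. -/
def conv {n : ℕ} : CPE n → CPD n
  | .tru => .tru
  | .fls => .fls
  | .var x => .var x
  | .not φ => .not (conv φ)
  | .and φ ψ => (List.finRange n).foldr CPD.delta (.and (conv φ) (conv ψ))
  | .or φ ψ => (List.finRange n).foldr CPD.delta (.or (conv φ) (conv ψ))
  | .pev x b φ => .pev x b (conv φ)

/-- Child relation on CPDs. -/
inductive CPD.IsChild {n : ℕ} : CPD n → CPD n → Prop
  | not   (φ : CPD n) : IsChild φ (.not φ)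
  | andl  (φ ψ : CPD n) : IsChild φ (.and φ ψ)
  | andr  (φ ψ : CPD n) : IsChild ψ (.and φ ψ)
  | orl   (φ ψ : CPD n) : IsChild φ (.or φ ψ)
  | orr   (φ ψ : CPD n) : IsChild ψ (.or φ ψ)
  | pev   (x : Fin n) (b : Bool) (φ : CPD n) : IsChild φ (.pev x b φ)
  | delta (x : Fin n) (φ : CPD n) : IsChild φ (.delta x φ)

/-- `ψ` is a descendant of `φ` (reflexive-transitive closure of the child relation). -/
def CPD.Desc {n : ℕ} (ψ φ : CPD n) : Prop := Relation.ReflTransGen CPD.IsChild ψ φ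


section DegreeBounds

open Finsupp

variable {V F : Type*} [CommRing F]

/-- Auxiliary: every variable has exponent at most `k` in every monomial of `p`. -/
def DegB (k : ℕ) (p : MvPolynomial V F) : Prop :=
  ∀ m ∈ p.support, ∀ x : V, m x ≤ k

lemma DegB.mono {k k' : ℕ} {p : MvPolynomial V F} (h : DegB k p) (hk : k ≤ k') :
    DegB k' p := fun m hm x => (h m hm x).trans hk

lemma degB_zero (k : ℕ) : DegB k (0 : MvPolynomial V F) := by
  intro m hm x; simp at hm

lemma degB_one (k : ℕ) : DegB k (1 : MvPolynomial V F) := by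
  intro m hm x
  classical
  rw [MvPolynomial.mem_support_iff, MvPolynomial.coeff_one] at hm
  split at hm
  · next h => simp [← h]
  · exact absurd rfl hm

lemma degB_X (x : V) : DegB 1 (MvPolynomial.X x : MvPolynomial V F) := by
  intro m hm y
  classical
  rw [MvPolynomial.mem_support_iff, MvPolynomial.coeff_X'] at hm
  split at hm
  · next h => rw [← h, Finsupp.single_apply]; split <;> simp
  · exact absurd rfl hm

lemma degB_add {k : ℕ} {p q : MvPolynomial V F} (hp : DegB k p) (hq : DegB k q) :
    DegB k (p + q) := by
  classical
  intro m hm x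
  rcases Finset.mem_union.1 (MvPolynomial.support_add hm) with h | h
  · exact hp m h x
  · exact hq m h x

lemma degB_sub {k : ℕ} {p q : MvPolynomial V F} (hp : DegB k p) (hq : DegB k q) :
    DegB k (p - q) := by
  rw [sub_eq_add_neg]
  refine degB_add hp ?_
  intro m hm x
  rw [MvPolynomial.support_neg] at hm
  exact hq m hm x

lemma degB_mul {a b : ℕ} {p q : MvPolynomial V F} (hp : DegB a p) (hq : DegB b q) :
    DegB (a + b) (p * q) := by
  classical
  intro m hm x
  obtain ⟨m1, hm1, m2, hm2, rfl⟩ := Finset.mem_add.1 (MvPolynomial.support_mul p q hm)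
  rw [Finsupp.add_apply]
  exact Nat.add_le_add (hp m1 hm1 x) (hq m2 hm2 x)

lemma deltaRed_support [DecidableEq V] (x : V) (p : MvPolynomial V F)
    {m' : V →₀ ℕ} (h : m' ∈ (deltaRed x p).support) :
    ∃ m ∈ p.support, m' = Finsupp.update m x (min (m x) 1) := by
  classical
  obtain ⟨m, hm, hm'⟩ := Finset.mem_biUnion.1 (MvPolynomial.support_sum h)
  exact ⟨m, hm, Finset.mem_singleton.1 (MvPolynomial.support_monomial_subset hm')⟩

lemma degB_deltaRed [DecidableEq V] {k : ℕ} (hk : 1 ≤ k) (x : V)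
    {p : MvPolynomial V F} (hp : DegB k p) : DegB k (deltaRed x p) := by
  intro m hm y
  obtain ⟨m0, hm0, rfl⟩ := deltaRed_support x p hm
  rw [Finsupp.coe_update, Function.update_apply]
  split
  · exact le_trans (min_le_right _ _) hk
  · exact hp m0 hm0 y

lemma foldr_deltaRed_support {n : ℕ} (l : List (Fin n)) (p : MvPolynomial (Fin n) F)
    {m' : Fin n →₀ ℕ} (h : m' ∈ (l.foldr deltaRed p).support) :
    ∃ m ∈ p.support, (∀ y, m' y ≤ m y) ∧ ∀ x ∈ l, m' x ≤ 1 := by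
  induction l generalizing m' with
  | nil => exact ⟨m', h, fun y => le_rfl, by simp⟩
  | cons a l ih =>
    obtain ⟨m'', hm'', rfl⟩ := deltaRed_support a _ h
    obtain ⟨m, hm, hle, h1⟩ := ih hm''
    refine ⟨m, hm, ?_, ?_⟩
    · intro y
      rw [Finsupp.coe_update, Function.update_apply]
      split
      · next hy => exact le_trans (min_le_left _ _) (by rw [hy]; exact hle a)
      · exact hle y
    · intro x hx
      rw [Finsupp.coe_update, Function.update_apply]
      split
      · next => exact min_le_right _ _
      · next hy =>
          exact h1 x (by rcases List.mem_cons.1 hx with h | h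
                         · exact absurd h hy
                         · exact h)

lemma pevalVar_monomial [DecidableEq V] (x : V) (a : F) (m : V →₀ ℕ) (c : F) :
    pevalVar x a (monomial m c) = monomial (m.erase x) (c * a ^ m x) := by
  classical
  unfold pevalVar
  rw [aeval_monomial, MvPolynomial.algebraMap_eq]
  have key : (m.prod fun y k => ((if y = x then C a else X y) : MvPolynomial V F) ^ k)
      = C (a ^ m x) * monomial (m.erase x) 1 := by
    nth_rewrite 1 [← Finsupp.single_add_erase x m]
    rw [Finsupp.prod_add_index' (fun y => pow_zero _) (fun y k1 k2 => pow_add _ k1 k2)]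
    congr 1
    · rw [Finsupp.prod_single_index]
      · rw [if_pos rfl, ← map_pow]
      · exact pow_zero _
    · rw [Finsupp.prod_congr (g2 := fun y k => (X y : MvPolynomial V F) ^ k) ?_]
      · rw [monomial_eq, map_one, one_mul]
      · intro y hy
        rw [Finsupp.support_erase, Finset.mem_erase] at hy
        rw [if_neg hy.1]
  rw [key, ← mul_assoc, ← C_mul, C_mul_monomial, mul_one]

lemma pevalVar_support [DecidableEq V] (x : V) (a : F) (p : MvPolynomial V F)
    {m' : V →₀ ℕ} (h : m' ∈ (pevalVar x a p).support) :
    ∃ m ∈ p.support, ∀ y, m' y ≤ m y := by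
  classical
  have hrepr : pevalVar x a p
      = ∑ v ∈ p.support, pevalVar x a (monomial v (coeff v p)) := by
    conv_lhs => rw [← support_sum_monomial_coeff p]
    simp only [pevalVar, map_sum]
  rw [hrepr] at h
  obtain ⟨v, hv, hmem⟩ := Finset.mem_biUnion.1 (MvPolynomial.support_sum h)
  rw [pevalVar_monomial] at hmem
  have := Finset.mem_singleton.1 (MvPolynomial.support_monomial_subset hmem)
  subst this
  refine ⟨v, hv, fun y => ?_⟩
  rcases eq_or_ne y x with rfl | hy
  · simp
  · rw [Finsupp.erase_ne hy]

lemma degB_pevalVar [DecidableEq V] {k : ℕ} (x : V) (a : F)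
    {p : MvPolynomial V F} (hp : DegB k p) : DegB k (pevalVar x a p) := by
  intro m' h y
  obtain ⟨m, hm, hle⟩ := pevalVar_support x a p h
  exact (hle y).trans (hp m hm y)

end DegreeBounds

lemma arith_foldr {n : ℕ} {F : Type*} [CommRing F] (l : List (Fin n)) (c : CPD n) :
    (l.foldr CPD.delta c).arith F = l.foldr deltaRed (c.arith F) := by
  induction l with
  | nil => rfl
  | cons a l ih => simp only [List.foldr_cons, CPD.arith, ih]

lemma desc_foldr {n : ℕ} {F : Type*} [CommRing F] (c : CPD n)
    (hc : ∀ ψ : CPD n, CPD.Desc ψ c → DegB 2 (ψ.arith F)) :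
    ∀ l : List (Fin n), ∀ ψ : CPD n, CPD.Desc ψ (l.foldr CPD.delta c) →
      DegB 2 (ψ.arith F) := by
  intro l
  induction l with
  | nil => exact hc
  | cons a l ih =>
    intro ψ h
    rcases h.cases_tail with heq | ⟨c', hdc, hchild⟩
    · rw [← heq]
      show DegB 2 (deltaRed a ((l.foldr CPD.delta c).arith F))
      exact degB_deltaRed one_le_two a (ih _ Relation.ReflTransGen.refl)
    · cases hchild
      exact ih _ hdc

theorem conv_bounds {n : ℕ} {F : Type*} [CommRing F] (φ : CPE n) :
    DegB 1 ((conv φ).arith F) ∧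
    (∀ ψ : CPD n, CPD.Desc ψ (conv φ) → DegB 2 (ψ.arith F)) := by
  induction φ with
  | tru =>
    refine ⟨degB_one 1, fun ψ h => ?_⟩
    rcases h.cases_tail with heq | ⟨c', hdc, hchild⟩
    · rw [← heq]; exact degB_one 2
    · cases hchild
  | fls =>
    refine ⟨degB_zero 1, fun ψ h => ?_⟩
    rcases h.cases_tail with heq | ⟨c', hdc, hchild⟩
    · rw [← heq]; exact degB_zero 2
    · cases hchild
  | var x =>
    refine ⟨degB_X x, fun ψ h => ?_⟩
    rcases h.cases_tail with heq | ⟨c', hdc, hchild⟩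
    · rw [← heq]; exact (degB_X x).mono one_le_two
    · cases hchild
  | not φ ih =>
    have hA : DegB 1 ((conv (CPE.not φ)).arith F) := degB_sub (degB_one 1) ih.1
    refine ⟨hA, fun ψ h => ?_⟩
    rcases h.cases_tail with heq | ⟨c', hdc, hchild⟩
    · rw [← heq]; exact hA.mono one_le_two
    · cases hchild
      exact ih.2 _ hdc
  | pev x b φ ih =>
    have hA : DegB 1 ((conv (CPE.pev x b φ)).arith F) := degB_pevalVar x _ ih.1
    refine ⟨hA, fun ψ h => ?_⟩
    rcases h.cases_tail with heq | ⟨c', hdc, hchild⟩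
    · rw [← heq]; exact hA.mono one_le_two
    · cases hchild
      exact ih.2 _ hdc
  | and φ₁ φ₂ ih₁ ih₂ =>
    have hc : ∀ ψ : CPD n, CPD.Desc ψ (CPD.and (conv φ₁) (conv φ₂)) →
        DegB 2 (ψ.arith F) := by
      intro ψ h
      rcases h.cases_tail with heq | ⟨c', hdc, hchild⟩
      · rw [← heq]
        exact degB_mul ih₁.1 ih₂.1
      · cases hchild
        · exact ih₁.2 _ hdc
        · exact ih₂.2 _ hdc
    refine ⟨?_, desc_foldr _ hc _⟩
    show DegB 1 (((List.finRange n).foldr CPD.delta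
      (CPD.and (conv φ₁) (conv φ₂))).arith F)
    rw [arith_foldr]
    intro m hm x
    obtain ⟨m0, _, _, h1⟩ := foldr_deltaRed_support _ _ hm
    exact h1 x (List.mem_finRange x)
  | or φ₁ φ₂ ih₁ ih₂ =>
    have hc : ∀ ψ : CPD n, CPD.Desc ψ (CPD.or (conv φ₁) (conv φ₂)) →
        DegB 2 (ψ.arith F) := by
      intro ψ h
      rcases h.cases_tail with heq | ⟨c', hdc, hchild⟩
      · rw [← heq]
        exact degB_sub (degB_add (ih₁.1.mono one_le_two) (ih₂.1.mono one_le_two))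
          (degB_mul ih₁.1 ih₂.1)
      · cases hchild
        · exact ih₁.2 _ hdc
        · exact ih₂.2 _ hdc
    refine ⟨?_, desc_foldr _ hc _⟩
    show DegB 1 (((List.finRange n).foldr CPD.delta
      (CPD.or (conv φ₁) (conv φ₂))).arith F)
    rw [arith_foldr]
    intro m hm x
    obtain ⟨m0, _, _, h1⟩ := foldr_deltaRed_support _ _ hm
    exact h1 x (List.mem_finRange x)

/-- every descendant of `conv(φ)` has arithmetisation of maximum degree at
most 2: every variable appears with exponent at most 2 in every monomial. -/
theorem conv_descendant_degree_le_two {q : ℕ} [Fact q.Prime] {n : ℕ}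
    (φ : CPE n) (ψ : CPD n) (hdesc : CPD.Desc ψ (conv φ)) :
    ∀ m ∈ (ψ.arith (ZMod q)).support, ∀ x : Fin n, m x ≤ 2 :=
  (conv_bounds φ).2 ψ hdesc
end
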